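/- arXiv:0811.3739 — 2 statements merged into one kernel-verified Lean document; each statement's English description precedes it below -/
import Mathlib

section
/- The six operators E₁,…,E₆ on ℂ³ ⊗ ℂ³ satisfy ∑_{k=1}^{6} E_k |ψ₁⟩⟨ψ₁| E_k† = |φ⟩⟨φ|, where ψ₁ = (|0⟩⊗|1⟩ + |1⟩⊗|0⟩)/√2 and φ = √α(β|0⟩⊗|0⟩ + |1⟩⊗|1⟩). -/
open Kronecker Matrix ComplexOrder

noncomputable section

/-- Product (simple) vector in `ℂ^a ⊗ ℂ^b`, identified with functions `Fin a × Fin b → ℂ`. -/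
def IsSimpleVec {a b : ℕ} (v : Fin a × Fin b → ℂ) : Prop :=
  ∃ (x : Fin a → ℂ) (y : Fin b → ℂ), v = fun p => x p.1 * y p.2

/-- Rank-one projection `|v⟩⟨v|`. -/
def proj {d : Type*} [Fintype d] (v : d → ℂ) : Matrix d d ℂ :=
  Matrix.vecMulVec v (star v)

/-- The standard basis vector `|i⟩` of `ℂ³`. -/
def e (i : Fin 3) : Fin 3 → ℂ := Pi.single i 1

/-- The matrix unit `|i⟩⟨j|` on `ℂ³`. -/
def u (i j : Fin 3) : Matrix (Fin 3) (Fin 3) ℂ := Matrix.single i j 1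

/-- `α = (2 − √3)/4`. -/
def α : ℝ := (2 - Real.sqrt 3) / 4

/-- `β = 2 + √3`. -/
def β : ℝ := 2 + Real.sqrt 3

/-- `√α` as a complex number. -/
def sα : ℂ := ((Real.sqrt α : ℝ) : ℂ)

/-- `√β` as a complex number. -/
def sβ : ℂ := ((Real.sqrt β : ℝ) : ℂ)

/-- `√(2αβ)` as a complex number. -/
def sγ : ℂ := ((Real.sqrt (2 * α * β) : ℝ) : ℂ)

/-- The six Kraus operators `E₁, …, E₆` on `ℂ³ ⊗ ℂ³`. -/
def E : Fin 6 → Matrix (Fin 3 × Fin 3) (Fin 3 × Fin 3) ℂ :=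
  ![sα • ((sβ • u 0 0 + u 1 1) ⊗ₖ (sβ • u 0 1 + u 1 0)),
    sα • ((u 1 0 + sβ • u 0 1) ⊗ₖ (u 1 1 + sβ • u 0 0)),
    sα • ((sβ • u 0 0 + u 1 2) ⊗ₖ (sβ • u 0 2 + u 1 0)),
    sα • ((u 1 0 + sβ • u 0 2) ⊗ₖ (u 1 2 + sβ • u 0 0)),
    u 1 1 ⊗ₖ (sγ • u 1 1 + u 2 2),
    u 2 2 ⊗ₖ (u 1 1 + sγ • u 2 2)]

/-- `ψ₁ = (|0⟩⊗|1⟩ + |1⟩⊗|0⟩)/√2`. -/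
def ψ₁ : Fin 3 × Fin 3 → ℂ :=
  ((Real.sqrt 2 : ℝ) : ℂ)⁻¹ • (fun p => e 0 p.1 * e 1 p.2 + e 1 p.1 * e 0 p.2)

/-- `ψ₂ = (|0⟩⊗|2⟩ + |2⟩⊗|0⟩)/√2`. -/
def ψ₂ : Fin 3 × Fin 3 → ℂ :=
  ((Real.sqrt 2 : ℝ) : ℂ)⁻¹ • (fun p => e 0 p.1 * e 2 p.2 + e 2 p.1 * e 0 p.2)

/-- `φ = √α(β|0⟩⊗|0⟩ + |1⟩⊗|1⟩)`. -/
def φ : Fin 3 × Fin 3 → ℂ :=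
  sα • (fun p => ((β : ℝ) : ℂ) * (e 0 p.1 * e 0 p.2) + e 1 p.1 * e 1 p.2)


/-! Conjugating a rank-one projection gives `E |ψ⟩⟨ψ| E† = |Eψ⟩⟨Eψ|`. Both `E₁` and `E₂` send `ψ₁`
to `φ / √2` (the `|00⟩` coefficient picks up `√β · √β = β`), while `E₃, …, E₆` annihilate `ψ₁`;
so the sum is `2 · |φ⟩⟨φ| / 2`. -/

theorem mul_proj_mul_conjTranspose {d : Type*} [Fintype d] (A : Matrix d d ℂ) (v : d → ℂ) :
    A * proj v * Aᴴ = proj (A *ᵥ v) := by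
  rw [proj, proj, mul_vecMulVec, vecMulVec_mul, star_mulVec]

theorem proj_smul {d : Type*} [Fintype d] (c : ℂ) (v : d → ℂ) :
    proj (c • v) = (Complex.normSq c : ℂ) • proj v := by
  rw [proj, proj, star_smul, smul_vecMulVec, vecMulVec_smul, smul_smul, Complex.star_def,
    Complex.mul_conj]

theorem sβ_mul_sβ : sβ * sβ = β := by
  rw [sβ, ← Complex.ofReal_mul, Real.mul_self_sqrt (by rw [β]; positivity)]

theorem E_mulVec_ψ₁ (k : Fin 6) :
    E k *ᵥ ψ₁ = if k < 2 then ((Real.sqrt 2 : ℝ) : ℂ)⁻¹ • φ else 0 := by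
  fin_cases k <;> funext p <;> fin_cases p <;>
    simp [E, ψ₁, φ, u, e, mulVec, dotProduct, Fintype.sum_prod_type, sβ_mul_sβ,
      Matrix.single, Pi.single_apply] <;> ring

theorem kraus_maps_psi_one_to_phi : ∑ k, E k * proj ψ₁ * (E k)ᴴ = proj φ := by
  calc ∑ k, E k * proj ψ₁ * (E k)ᴴ = ∑ k, proj (E k *ᵥ ψ₁) := by
        simp only [mul_proj_mul_conjTranspose]
    _ = (2 : ℂ) • proj (((Real.sqrt 2 : ℝ) : ℂ)⁻¹ • φ) := by
        simp [E_mulVec_ψ₁, Fin.sum_univ_six, two_smul, proj]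
    _ = proj φ := by
        rw [proj_smul, smul_smul, ← Complex.ofReal_inv, Complex.normSq_ofReal, ← mul_inv,
          Real.mul_self_sqrt zero_le_two]
        norm_num
end
end

section
/- Let {A_k ⊗ B_k}_{k=1,…,n} be a separable operation on ℂ^a ⊗ ℂ^b (so ∑_k (A_k ⊗ B_k)†(A_k ⊗ B_k) = I), let ψ₁, ψ₂ be unit vectors in ℂ^a ⊗ ℂ^b, and let φ be an entangled unit vector such that ∑_k (A_k ⊗ B_k)|ψ_i⟩⟨ψ_i|(A_k ⊗ B_k)† = |φ⟩⟨φ| for both i = 1 and i = 2. Then no nonzero vector in the linear span of ψ₁ and ψ₂ is a product (simple) vector. -/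
open Kronecker Matrix

noncomputable section

/-
A Kraus operator `E_k` of a channel sending `|ψ⟩⟨ψ|` to the pure state `|φ⟩⟨φ|` must map `ψ`
into the line `ℂ φ`, since `∑ₖ |E_k ψ⟩⟨E_k ψ| = |φ⟩⟨φ|` and a pure state is not a nontrivial
sum of positive rank-one terms. Hence every `E_k = A_k ⊗ B_k` maps the whole span of `ψ₁, ψ₂`
into `ℂ φ`. A nonzero `v` in that span is not killed by all `E_k`, by the completeness relation,
so some `E_k v` is a nonzero multiple of `φ`; but `A_k ⊗ B_k` maps product vectors to product
vectors, so `v` simple would force `φ` simple.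
-/

section RankOne

variable {m : Type*} [Fintype m]

theorem proj_mulVec (w u : m → ℂ) : proj w *ᵥ u = (star w ⬝ᵥ u) • w := by
  simpa [proj] using vecMulVec_mulVec w (star w) u

theorem mul_proj_mul_conjTranspose_s11 (E : Matrix m m ℂ) (ψ : m → ℂ) :
    E * proj ψ * Eᴴ = proj (E *ᵥ ψ) := by
  rw [proj, proj, mul_vecMulVec, vecMulVec_mul, star_mulVec]

theorem star_dotProduct_proj_mulVec (w u : m → ℂ) :
    star u ⬝ᵥ (proj w *ᵥ u) = (Complex.normSq (star w ⬝ᵥ u) : ℂ) := by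
  rw [proj_mulVec, dotProduct_smul, smul_eq_mul, Complex.normSq_eq_conj_mul_self, mul_comm]
  congr 1
  simp [dotProduct, mul_comm]

theorem dotProduct_eq_zero_of_sum_proj_eq_proj {ι : Type*} [Fintype ι] {w : ι → m → ℂ}
    {φ u : m → ℂ} (h : ∑ k, proj (w k) = proj φ) (hu : star φ ⬝ᵥ u = 0) (k : ι) :
    star (w k) ⬝ᵥ u = 0 := by
  have hsum := congrArg (fun M => star u ⬝ᵥ (M *ᵥ u)) h
  simp only [sum_mulVec, dotProduct_sum, star_dotProduct_proj_mulVec, hu, map_zero,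
    Complex.ofReal_zero] at hsum
  have hnormSq : ∑ j, Complex.normSq (star (w j) ⬝ᵥ u) = 0 := by exact_mod_cast hsum
  exact Complex.normSq_eq_zero.1 <| (Finset.sum_eq_zero_iff_of_nonneg
    fun j _ => Complex.normSq_nonneg _).1 hnormSq k (Finset.mem_univ k)

open scoped ComplexOrder in
theorem mem_span_singleton_of_sum_proj_eq_proj {ι : Type*} [Fintype ι] {w : ι → m → ℂ}
    {φ : m → ℂ} (h : ∑ k, proj (w k) = proj φ) (k : ι) : w k ∈ ℂ ∙ φ := by
  set c := (star φ ⬝ᵥ w k) / (star φ ⬝ᵥ φ)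
  set u := w k - c • φ
  have hφu : star φ ⬝ᵥ u = 0 := by
    by_cases hφ : φ = 0
    · simp [hφ]
    have hφφ : star φ ⬝ᵥ φ ≠ 0 := mt dotProduct_star_self_eq_zero.1 hφ
    simp only [u, c, dotProduct_sub, dotProduct_smul, smul_eq_mul, div_mul_cancel₀ _ hφφ,
      sub_self]
  have huu : star u ⬝ᵥ u = 0 := by
    calc star u ⬝ᵥ u = star (w k) ⬝ᵥ u - star c * (star φ ⬝ᵥ u) := by
          simp only [u, star_sub, star_smul, sub_dotProduct, smul_dotProduct, smul_eq_mul]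
      _ = 0 := by rw [dotProduct_eq_zero_of_sum_proj_eq_proj h hφu, hφu, mul_zero, sub_zero]
  have hu0 : u = 0 := dotProduct_star_self_eq_zero.1 huu
  exact Submodule.mem_span_singleton.2 ⟨c, (sub_eq_zero.1 hu0).symm⟩

theorem mulVec_mem_span_singleton_of_sum_conj_proj_eq_proj {ι : Type*} [Fintype ι]
    {E : ι → Matrix m m ℂ} {ψ φ : m → ℂ} (h : ∑ k, E k * proj ψ * (E k)ᴴ = proj φ) (k : ι) :
    E k *ᵥ ψ ∈ ℂ ∙ φ :=
  mem_span_singleton_of_sum_proj_eq_proj (w := fun k => E k *ᵥ ψ)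
    (by simpa only [mul_proj_mul_conjTranspose_s11] using h) k

theorem eq_zero_of_forall_mulVec_eq_zero [DecidableEq m] {ι : Type*} [Fintype ι]
    {E : ι → Matrix m m ℂ} (hE : ∑ k, (E k)ᴴ * E k = 1) {v : m → ℂ}
    (hv : ∀ k, E k *ᵥ v = 0) : v = 0 := by
  rw [← one_mulVec v, ← hE, sum_mulVec]
  simp [← mulVec_mulVec, hv]

end RankOne

section Simple

variable {a b : ℕ}

theorem IsSimpleVec.kronecker_mulVec {v : Fin a × Fin b → ℂ} (hv : IsSimpleVec v)
    (A : Matrix (Fin a) (Fin a) ℂ) (B : Matrix (Fin b) (Fin b) ℂ) :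
    IsSimpleVec ((A ⊗ₖ B) *ᵥ v) := by
  obtain ⟨x, y, rfl⟩ := hv
  refine ⟨A *ᵥ x, B *ᵥ y, funext fun p => ?_⟩
  simp only [mulVec, dotProduct, kroneckerMap_apply, Fintype.sum_prod_type, Finset.sum_mul_sum]
  exact Finset.sum_congr rfl fun i _ => Finset.sum_congr rfl fun j _ => by ring

theorem IsSimpleVec.of_smul {v : Fin a × Fin b → ℂ} {d : ℂ} (hv : IsSimpleVec (d • v))
    (hd : d ≠ 0) : IsSimpleVec v := by
  obtain ⟨x, y, hxy⟩ := hv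
  refine ⟨d⁻¹ • x, y, funext fun p => ?_⟩
  have hp := congrFun hxy p
  simp only [Pi.smul_apply, smul_eq_mul] at hp ⊢
  rw [mul_assoc, ← hp, inv_mul_cancel_left₀ hd]

end Simple

theorem sep_transform_forces_entangled_span_general {a b n : ℕ}
    (A : Fin n → Matrix (Fin a) (Fin a) ℂ) (B : Fin n → Matrix (Fin b) (Fin b) ℂ)
    (hcomp : ∑ k, (A k ⊗ₖ B k)ᴴ * (A k ⊗ₖ B k) = 1)
    (ψ₁ ψ₂ : Fin a × Fin b → ℂ)
    (φ : Fin a × Fin b → ℂ) (hent : ¬ IsSimpleVec φ)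
    (h₁ : ∑ k, (A k ⊗ₖ B k) * proj ψ₁ * (A k ⊗ₖ B k)ᴴ = proj φ)
    (h₂ : ∑ k, (A k ⊗ₖ B k) * proj ψ₂ * (A k ⊗ₖ B k)ᴴ = proj φ) :
    ∀ v ∈ Submodule.span ℂ {ψ₁, ψ₂}, v ≠ 0 → ¬ IsSimpleVec v := by
  intro v hv hv0 hsimple
  have hline : ∀ k, (A k ⊗ₖ B k) *ᵥ v ∈ ℂ ∙ φ := by
    intro k
    obtain ⟨α, β, rfl⟩ := Submodule.mem_span_pair.1 hv
    rw [mulVec_add, mulVec_smul, mulVec_smul]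
    exact add_mem (Submodule.smul_mem _ α (mulVec_mem_span_singleton_of_sum_conj_proj_eq_proj h₁ k))
      (Submodule.smul_mem _ β (mulVec_mem_span_singleton_of_sum_conj_proj_eq_proj h₂ k))
  obtain ⟨k, hk⟩ : ∃ k, (A k ⊗ₖ B k) *ᵥ v ≠ 0 := by
    by_contra! h
    exact hv0 (eq_zero_of_forall_mulVec_eq_zero hcomp h)
  obtain ⟨d, hd⟩ := Submodule.mem_span_singleton.1 (hline k)
  have hd0 : d ≠ 0 := by
    rintro rfl
    exact hk (by rw [← hd, zero_smul])
  exact hent ((hd ▸ hsimple.kronecker_mulVec (A k) (B k)).of_smul hd0)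

theorem sep_transform_forces_entangled_span {a b n : ℕ}
    (A : Fin n → Matrix (Fin a) (Fin a) ℂ) (B : Fin n → Matrix (Fin b) (Fin b) ℂ)
    (hcomp : ∑ k, (A k ⊗ₖ B k)ᴴ * (A k ⊗ₖ B k) = 1)
    (ψ₁ ψ₂ : Fin a × Fin b → ℂ) (hψ₁ : star ψ₁ ⬝ᵥ ψ₁ = 1) (hψ₂ : star ψ₂ ⬝ᵥ ψ₂ = 1)
    (φ : Fin a × Fin b → ℂ) (hφ : star φ ⬝ᵥ φ = 1) (hent : ¬ IsSimpleVec φ)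
    (h₁ : ∑ k, (A k ⊗ₖ B k) * proj ψ₁ * (A k ⊗ₖ B k)ᴴ = proj φ)
    (h₂ : ∑ k, (A k ⊗ₖ B k) * proj ψ₂ * (A k ⊗ₖ B k)ᴴ = proj φ) :
    ∀ v ∈ Submodule.span ℂ {ψ₁, ψ₂}, v ≠ 0 → ¬ IsSimpleVec v :=
  sep_transform_forces_entangled_span_general A B hcomp ψ₁ ψ₂ φ hent h₁ h₂
end
end
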